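/- arXiv:0801.3780 — 2 statements merged into one kernel-verified Lean document; each statement's English description precedes it below -/
import Mathlib

section
/- Let ω ∈ Ω be such that T(ω) < +∞. Then: (i) for every n ≥ T(ω), X^{(n)}(ω) ∈ S°; (ii) setting, for n ≥ 1, D_n(ω) = sup{ |1_{[T≤n]}(ω) ln⟨y, X^{(n)}(ω) x⟩ − ln‖Y^{(n)}(ω) y‖| : x, y ∈ B̄ }, one has sup_{n≥1} D_n(ω) < +∞. -/
open MeasureTheory ProbabilityTheory Filter Topology Matrix Finset

noncomputable section

namespace StablePaper

/-- The set of `q × q` matrices. -/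
abbrev Mat (q : ℕ) := Matrix (Fin q) (Fin q) ℝ

instance {q : ℕ} : MeasurableSpace (Mat q) := MeasurableSpace.pi

/-- Membership in the semigroup `S`: nonnegative entries, every row and every
column contains a strictly positive entry. -/
def memS {q : ℕ} (g : Mat q) : Prop :=
  (∀ i j, 0 ≤ g i j) ∧ (∀ i, ∃ j, 0 < g i j) ∧ (∀ j, ∃ i, 0 < g i j)

/-- Membership in `S°`: all entries strictly positive. -/
def memS0 {q : ℕ} (g : Mat q) : Prop := ∀ i j, 0 < g i j

/-- The norm `‖x‖ = ∑ i, |x i|` on `ℝ^q`. -/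
def nrm {q : ℕ} (x : Fin q → ℝ) : ℝ := ∑ i, |x i|

/-- The cone `C̄` of vectors with nonnegative coordinates. -/
def inCbar {q : ℕ} (x : Fin q → ℝ) : Prop := ∀ i, 0 ≤ x i

/-- `B̄`: unit vectors of `C̄`. -/
def inBbar {q : ℕ} (x : Fin q → ℝ) : Prop := inCbar x ∧ nrm x = 1

/-- `B`: unit vectors with strictly positive coordinates. -/
def inB {q : ℕ} (x : Fin q → ℝ) : Prop := (∀ i, 0 < x i) ∧ nrm x = 1

/-- The projective action `g · x = gx / ‖gx‖`. -/
def proj {q : ℕ} (g : Mat q) (x : Fin q → ℝ) : Fin q → ℝ :=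
  fun i => g.mulVec x i / nrm (g.mulVec x)

/-- `m(x,y) = min { x i / y i : y i > 0 }`. -/
def mfun {q : ℕ} (x y : Fin q → ℝ) : ℝ :=
  sInf ((fun i => x i / y i) '' {i | 0 < y i})

/-- The distance `d(x,y) = φ(m(x,y) m(y,x))` with `φ(s) = (1-s)/(1+s)`. -/
def dB {q : ℕ} (x y : Fin q → ℝ) : ℝ :=
  (1 - mfun x y * mfun y x) / (1 + mfun x y * mfun y x)

/-- The cocycle `ξ(g,x) = ln ‖gx‖`. -/
def xi {q : ℕ} (g : Mat q) (x : Fin q → ℝ) : ℝ := Real.log (nrm (g.mulVec x))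

/-- `X^{(n)} = X_n ⋯ X_1` (with `X^{(0)}` the identity matrix). -/
def Xprod {q : ℕ} {Ω : Type} (X : ℕ → Ω → Mat q) : ℕ → Ω → Mat q
  | 0 => fun _ => 1
  | n + 1 => fun ω => X (n + 1) ω * Xprod X n ω

/-- `Y^{(n)} = Y_1 ⋯ Y_n` where `Y_k = X_kᵀ`. -/
def Yprod {q : ℕ} {Ω : Type} (X : ℕ → Ω → Mat q) : ℕ → Ω → Mat q
  | 0 => fun _ => 1
  | n + 1 => fun ω => Yprod X n ω * (X (n + 1) ω)ᵀ

/-- `Ỹ^{(n)} = Y_n ⋯ Y_1` where `Y_k = X_kᵀ`. -/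
def Ytil {q : ℕ} {Ω : Type} (X : ℕ → Ω → Mat q) : ℕ → Ω → Mat q
  | 0 => fun _ => 1
  | n + 1 => fun ω => (X (n + 1) ω)ᵀ * Ytil X n ω

/-- The hitting time `T = inf { n ≥ 1 : X^{(n)} ∈ S° }` (equal to `⊤` if no such `n`). -/
def hitT {q : ℕ} {Ω : Type} (X : ℕ → Ω → Mat q) (ω : Ω) : ℕ∞ :=
  ⨅ (n : ℕ) (_ : 1 ≤ n ∧ memS0 (Xprod X n ω)), (n : ℕ∞)

/-- The indicator `1_{[T ≤ n]}`. -/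
def indT {q : ℕ} {Ω : Type} (X : ℕ → Ω → Mat q) (n : ℕ) (ω : Ω) : ℝ :=
  if hitT X ω ≤ (n : ℕ∞) then 1 else 0

/-- Condition (C). -/
def CondC {q : ℕ} {Ω : Type} [MeasurableSpace Ω] (P : Measure Ω)
    (X : ℕ → Ω → Mat q) : Prop :=
  0 < P {ω | ∃ n, 1 ≤ n ∧ memS0 (Xprod X n ω)}

/-- `(X_n)` is an i.i.d. sequence. -/
def IID {q : ℕ} {Ω : Type} [MeasurableSpace Ω] (P : Measure Ω)
    (X : ℕ → Ω → Mat q) : Prop :=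
  (∀ n, Measurable (X n)) ∧
  iIndepFun X P ∧
  ∀ n, Measure.map (X n) P = Measure.map (X 1) P

/-- `N₁`-functional of a matrix: the sum of all entries. -/
def N1fun {q : ℕ} (g : Mat q) : ℝ := ∑ i, ∑ j, g i j

/-- `V₁`-functional of a matrix: the minimal row sum. -/
def V1fun {q : ℕ} (g : Mat q) : ℝ := sInf {r : ℝ | ∃ i, r = ∑ j, g i j}

/-- The spectral radius of a real matrix (via its complex spectrum). -/
def specRad {q : ℕ} (g : Mat q) : ℝ :=
  (spectralRadius ℂ (g.map (algebraMap ℝ ℂ))).toReal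

/-- A slowly varying function `L : (0,∞) → (0,∞)`. -/
def SlowlyVarying (L : ℝ → ℝ) : Prop :=
  (∀ u : ℝ, 0 < u → 0 < L u) ∧
  ∀ l : ℝ, 0 < l → Tendsto (fun u => L (l * u) / L u) atTop (𝓝 1)

/-- Convolution of two measures on `ℝ`. -/
def mconv (ρ₁ ρ₂ : Measure ℝ) : Measure ℝ :=
  Measure.map (fun p : ℝ × ℝ => p.1 + p.2) (ρ₁.prod ρ₂)

/-- `n`-fold convolution power. -/
def convPow (ρ : Measure ℝ) : ℕ → Measure ℝ
  | 0 => Measure.dirac 0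
  | n + 1 => mconv (convPow ρ n) ρ

/-- A stable law of index `α`: a non-Dirac probability measure `ρ` such that for
every `n ≥ 1` there is `d_n ∈ ℝ` with `ρ^{*n}` equal to the image of `ρ` under
`x ↦ n^{1/α} x + d_n`. -/
def IsStableLaw (α : ℝ) (ρ : Measure ℝ) : Prop :=
  IsProbabilityMeasure ρ ∧ (¬ ∃ c : ℝ, ρ = Measure.dirac c) ∧
  ∀ n : ℕ, 1 ≤ n → ∃ d : ℝ,
    convPow ρ n = Measure.map (fun x => (n : ℝ) ^ (1 / α) * x + d) ρ

/-- Convergence in distribution of real random variables to the law `ρ`. -/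
def ConvInDistrib {Ω : Type} [MeasurableSpace Ω] (P : Measure Ω)
    (Z : ℕ → Ω → ℝ) (ρ : Measure ℝ) : Prop :=
  ∀ f : BoundedContinuousFunction ℝ ℝ,
    Tendsto (fun n => ∫ ω, f (Z n ω) ∂P) atTop (𝓝 (∫ x, f x ∂ρ))

/-- `μ^{(n)}`: the law of `Y^{(n)} = Y_1 ⋯ Y_n`. -/
def muN {q : ℕ} {Ω : Type} [MeasurableSpace Ω] (P : Measure Ω)
    (X : ℕ → Ω → Mat q) (n : ℕ) : Measure (Mat q) :=
  Measure.map (fun ω => Yprod X n ω) P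

/-- The contraction coefficient `c(g)`. -/
def cg {q : ℕ} (g : Mat q) : ℝ :=
  sSup {r : ℝ | ∃ x y, inBbar x ∧ inBbar y ∧ x ≠ y ∧
    r = dB (proj g x) (proj g y) / dB x y}

/-- The coefficient `c(μ^{(n)})`. -/
def cmu {q : ℕ} {Ω : Type} [MeasurableSpace Ω] (P : Measure Ω)
    (X : ℕ → Ω → Mat q) (n : ℕ) : ℝ :=
  sSup {r : ℝ | ∃ y y', inBbar y ∧ inBbar y' ∧ y ≠ y' ∧
    r = ∫ g, dB (proj g y) (proj g y') / dB y y' ∂(muN P X n)}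

/-- `κ(μ) = inf_{n ≥ 1} c(μ^{(n)})^{1/n}`. -/
def kappa {q : ℕ} {Ω : Type} [MeasurableSpace Ω] (P : Measure Ω)
    (X : ℕ → Ω → Mat q) : ℝ :=
  sInf {r : ℝ | ∃ n, 1 ≤ n ∧ r = cmu P X n ^ ((n : ℝ)⁻¹)}

/-- `ν` is `μ`-invariant. -/
def MuInvariant {q : ℕ} (μ : Measure (Mat q)) (ν : Measure (Fin q → ℝ)) : Prop :=
  ∀ f : BoundedContinuousFunction (Fin q → ℝ) ℝ,
    ∫ x, (∫ g, f (proj g x) ∂μ) ∂ν = ∫ x, f x ∂ν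

/-- The Fourier kernels `P_t` (so `P = P_0`). -/
def Ptop {q : ℕ} (μ : Measure (Mat q)) (t : ℝ) (f : (Fin q → ℝ) → ℂ)
    (x : Fin q → ℝ) : ℂ :=
  ∫ g, Complex.exp (Complex.I * (t : ℂ) * (xi g x : ℂ)) * f (proj g x) ∂μ

/-- The sup norm `‖f‖_u` over `B̄`. -/
def supnorm {q : ℕ} (f : (Fin q → ℝ) → ℂ) : ℝ :=
  sSup {r : ℝ | ∃ x, inBbar x ∧ r = ‖f x‖}

/-- The Lipschitz seminorm `m(f)` with respect to the distance `d` on `B̄`. -/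
def mlip {q : ℕ} (f : (Fin q → ℝ) → ℂ) : ℝ :=
  sSup {r : ℝ | ∃ x y, inBbar x ∧ inBbar y ∧ x ≠ y ∧
    r = ‖f x - f y‖ / dB x y}

/-- Membership in the space `L` of `d`-Lipschitz functions on `B̄`. -/
def memL {q : ℕ} (f : (Fin q → ℝ) → ℂ) : Prop :=
  ∃ M : ℝ, ∀ x y, inBbar x → inBbar y → ‖f x - f y‖ ≤ M * dB x y

/-- The norm `‖f‖_L = ‖f‖_u + m(f)`. -/
def normL {q : ℕ} (f : (Fin q → ℝ) → ℂ) : ℝ := supnorm f + mlip f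

/-- `‖g‖ = sup { ‖gx‖ : x ∈ B̄ }`. -/
def opg {q : ℕ} (g : Mat q) : ℝ :=
  sSup {r : ℝ | ∃ x, inBbar x ∧ r = nrm (g.mulVec x)}

/-- `v(g) = inf { ‖gx‖ : x ∈ B̄ }`. -/
def vg {q : ℕ} (g : Mat q) : ℝ :=
  sInf {r : ℝ | ∃ x, inBbar x ∧ r = nrm (g.mulVec x)}

/-- `ℓ(g) = |ln ‖g‖| + |ln v(g)|`. -/
def ellg {q : ℕ} (g : Mat q) : ℝ := |Real.log (opg g)| + |Real.log (vg g)|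

/-- `ε(t) = ∫ min(|t| ℓ(g), 2) dμ(g)`. -/
def epsT {q : ℕ} (μ : Measure (Mat q)) (t : ℝ) : ℝ :=
  ∫ g, min (|t| * ellg g) 2 ∂μ

/-- The operator norm of `P_t - P` on `L`. -/
def opNormDiff {q : ℕ} (μ : Measure (Mat q)) (t : ℝ) : ℝ :=
  sSup {r : ℝ | ∃ f : (Fin q → ℝ) → ℂ, memL f ∧ normL f ≤ 1 ∧
    r = normL (fun x => Ptop μ t f x - Ptop μ 0 f x)}

/-!
Let `n₀ = T(ω)` and `A₀ = X^{(n₀)}(ω) ∈ S°`; for `n ≥ n₀` we have `X^{(n)} = C A₀` with `C ∈ S`.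
Since `‖Y^{(n)} y‖ = ⟨y, X^{(n)} 𝟙⟩`, both quantities in `D_n` are pairings of `y` with `X^{(n)}`.
Positivity of `A₀` gives `κ > 0` with `κ A₀ 𝟙 ≤ A₀ x ≤ A₀ 𝟙` coordinatewise for all `x ∈ B̄`, and
pairing with the nonnegative vector `Cᵀ y` preserves this, so `D_n ≤ |ln κ|` for `n ≥ n₀`.
For the finitely many `n < n₀` only `|ln ‖Y^{(n)} y‖|` remains, which is bounded because the row
sums of `X^{(n)}` are positive.
-/

lemma memS_one {q : ℕ} : memS (1 : Mat q) := by
  refine ⟨fun i j => ?_, fun i => ⟨i, by simp⟩, fun j => ⟨j, by simp⟩⟩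
  rw [Matrix.one_apply]
  split <;> norm_num

lemma memS_mul {q : ℕ} {A B : Mat q} (hA : memS A) (hB : memS B) : memS (A * B) := by
  obtain ⟨hA0, hArow, hAcol⟩ := hA
  obtain ⟨hB0, hBrow, hBcol⟩ := hB
  have hAB0 : ∀ i j, 0 ≤ (A * B) i j := fun i j =>
    dotProduct_nonneg_of_nonneg (hA0 i) fun k => hB0 k j
  have hpos : ∀ i j k, 0 < A i k → 0 < B k j → 0 < (A * B) i j := fun i j k hik hkj =>
    Finset.sum_pos' (fun l _ => mul_nonneg (hA0 i l) (hB0 l j)) ⟨k, mem_univ k, mul_pos hik hkj⟩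
  refine ⟨hAB0, fun i => ?_, fun j => ?_⟩
  · obtain ⟨k, hk⟩ := hArow i
    obtain ⟨j, hj⟩ := hBrow k
    exact ⟨j, hpos i j k hk hj⟩
  · obtain ⟨k, hk⟩ := hBcol j
    obtain ⟨i, hi⟩ := hAcol k
    exact ⟨i, hpos i j k hi hk⟩

lemma memS0_mul {q : ℕ} {A B : Mat q} (hA : memS A) (hB : memS0 B) : memS0 (A * B) := by
  intro i j
  obtain ⟨k, hk⟩ := hA.2.1 i
  exact Finset.sum_pos' (fun l _ => mul_nonneg (hA.1 i l) (hB l j).le)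
    ⟨k, mem_univ k, mul_pos hk (hB k j)⟩

section Products

variable {q : ℕ} {Ω : Type} {X : ℕ → Ω → Mat q} {ω : Ω}

lemma exists_memS_mul_Xprod (hX : ∀ k, 1 ≤ k → memS (X k ω)) {m n : ℕ} (hmn : m ≤ n) :
    ∃ C, memS C ∧ Xprod X n ω = C * Xprod X m ω := by
  induction n, hmn using Nat.le_induction with
  | base => exact ⟨1, memS_one, (one_mul _).symm⟩
  | succ n hmn ih =>
    obtain ⟨C, hC, hCe⟩ := ih
    refine ⟨X (n + 1) ω * C, memS_mul (hX (n + 1) (by omega)) hC, ?_⟩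
    rw [mul_assoc, ← hCe]
    rfl

lemma memS_Xprod (hX : ∀ k, 1 ≤ k → memS (X k ω)) (n : ℕ) : memS (Xprod X n ω) := by
  obtain ⟨C, hC, hCe⟩ := exists_memS_mul_Xprod hX (Nat.zero_le n)
  rw [hCe]
  simpa [Xprod] using hC

lemma Yprod_eq_transpose (n : ℕ) : Yprod X n ω = (Xprod X n ω)ᵀ := by
  induction n with
  | zero => simp [Yprod, Xprod]
  | succ n ih =>
    change Yprod X n ω * (X (n + 1) ω)ᵀ = (X (n + 1) ω * Xprod X n ω)ᵀ
    rw [ih, Matrix.transpose_mul]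

lemma exists_memS0_Xprod_of_hitT_lt_top (h : hitT X ω < ⊤) :
    ∃ n, memS0 (Xprod X n ω) ∧ hitT X ω = n := by
  unfold hitT at h ⊢
  rw [iInf_subtype'] at h ⊢
  have := ENat.iInf_natCast_lt_top.mp h
  obtain ⟨⟨n, hn⟩, he⟩ := ENat.exists_eq_iInf fun n : {n // 1 ≤ n ∧ memS0 (Xprod X n ω)} =>
    ((n : ℕ) : ℕ∞)
  exact ⟨n, hn.2, he.symm⟩

end Products

section Cone

variable {q : ℕ}

lemma nrm_of_nonneg {v : Fin q → ℝ} (hv : ∀ i, 0 ≤ v i) : nrm v = ∑ i, v i :=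
  Finset.sum_congr rfl fun i _ => abs_of_nonneg (hv i)

lemma inBbar.sum_eq_one {x : Fin q → ℝ} (hx : inBbar x) : ∑ i, x i = 1 :=
  (nrm_of_nonneg hx.1).symm.trans hx.2

lemma inBbar.le_one {x : Fin q → ℝ} (hx : inBbar x) : x ≤ 1 := fun i =>
  (Finset.single_le_sum (fun j _ => hx.1 j) (mem_univ i)).trans_eq hx.sum_eq_one

lemma inBbar.le_dotProduct {x f : Fin q → ℝ} {c : ℝ} (hx : inBbar x) (hf : ∀ i, c ≤ f i) :
    c ≤ x ⬝ᵥ f :=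
  calc c = x ⬝ᵥ fun _ => c := by simp [dotProduct, ← Finset.sum_mul, hx.sum_eq_one]
    _ ≤ x ⬝ᵥ f := dotProduct_le_dotProduct_of_nonneg_left hf hx.1

lemma inBbar.dotProduct_le {x f : Fin q → ℝ} {d : ℝ} (hx : inBbar x) (hf : ∀ i, f i ≤ d) :
    x ⬝ᵥ f ≤ d :=
  calc x ⬝ᵥ f ≤ x ⬝ᵥ fun _ => d := dotProduct_le_dotProduct_of_nonneg_left hf hx.1
    _ = d := by simp [dotProduct, ← Finset.sum_mul, hx.sum_eq_one]

lemma nrm_transpose_mulVec {A : Mat q} (hA : ∀ i j, 0 ≤ A i j) {y : Fin q → ℝ} (hy : inCbar y) :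
    nrm (Aᵀ *ᵥ y) = y ⬝ᵥ A *ᵥ 1 := by
  have hnonneg : ∀ j, 0 ≤ (Aᵀ *ᵥ y) j := fun j =>
    dotProduct_nonneg_of_nonneg (fun i => hA i j) hy
  rw [nrm_of_nonneg hnonneg, ← dotProduct_one, Matrix.mulVec_transpose, Matrix.dotProduct_mulVec]

end Cone

lemma exists_pos_forall_le {ι : Type*} [Finite ι] {f : ι → ℝ} (hf : ∀ i, 0 < f i) :
    ∃ c > 0, ∀ i, c ≤ f i := by
  cases isEmpty_or_nonempty ι
  · exact ⟨1, one_pos, isEmptyElim⟩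
  · obtain ⟨i₀, hi₀⟩ := Finite.exists_min f
    exact ⟨f i₀, hf i₀, hi₀⟩

lemma abs_log_sub_log_le {κ u v : ℝ} (hκ : 0 < κ) (hv : 0 ≤ v) (hlow : κ * v ≤ u) (hup : u ≤ v) :
    |Real.log u - Real.log v| ≤ |Real.log κ| := by
  rcases hv.eq_or_lt with rfl | hv
  · simp [le_antisymm hup (by simpa using hlow)]
  have hu : 0 < u := lt_of_lt_of_le (mul_pos hκ hv) hlow
  have h₁ : Real.log u ≤ Real.log v := Real.log_le_log hu hup
  have h₂ : Real.log κ + Real.log v ≤ Real.log u := by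
    rw [← Real.log_mul hκ.ne' hv.ne']
    exact Real.log_le_log (mul_pos hκ hv) hlow
  rw [abs_sub_comm, abs_of_nonneg (sub_nonneg.2 h₁)]
  linarith [neg_le_abs (Real.log κ)]

section Bounds

variable {q : ℕ}

lemma mulVec_one_apply (A : Mat q) (i : Fin q) : (A *ᵥ 1) i = ∑ j, A i j := by
  simp [Matrix.mulVec, dotProduct]

lemma memS0.memS {A : Mat q} (hA : memS0 A) : memS A :=
  ⟨fun i j => (hA i j).le, fun i => ⟨i, hA i i⟩, fun j => ⟨j, hA j j⟩⟩

lemma memS.mulVec_one_pos {A : Mat q} (hA : memS A) (i : Fin q) : 0 < (A *ᵥ 1) i := by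
  obtain ⟨j, hj⟩ := hA.2.1 i
  rw [mulVec_one_apply]
  exact Finset.sum_pos' (fun k _ => hA.1 i k) ⟨j, mem_univ j, hj⟩

lemma exists_abs_log_dotProduct_mulVec_one_le {A : Mat q} (hA : memS A) :
    ∃ M, ∀ y, inBbar y → |Real.log (y ⬝ᵥ A *ᵥ 1)| ≤ M := by
  obtain ⟨c, hc, hcle⟩ := exists_pos_forall_le hA.mulVec_one_pos
  obtain ⟨d, hled⟩ := Finite.exists_le (A *ᵥ 1)
  refine ⟨max |Real.log c| |Real.log d|, fun y hy => abs_le_max_abs_abs ?_ ?_⟩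
  · exact Real.log_le_log hc (hy.le_dotProduct hcle)
  · exact Real.log_le_log (hc.trans_le (hy.le_dotProduct hcle)) (hy.dotProduct_le hled)

lemma mulVec_le_mulVec_one {A : Mat q} (hA : ∀ i j, 0 ≤ A i j) {x : Fin q → ℝ} (hx : inBbar x) :
    A *ᵥ x ≤ A *ᵥ 1 := fun i =>
  dotProduct_le_dotProduct_of_nonneg_left hx.le_one (hA i)

lemma exists_pos_smul_mulVec_one_le_mulVec {A : Mat q} (hA : memS0 A) :
    ∃ κ : ℝ, 0 < κ ∧ ∀ x, inBbar x → κ • A *ᵥ 1 ≤ A *ᵥ x := by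
  have hrow := hA.memS.mulVec_one_pos
  obtain ⟨κ, hκ, hκle⟩ :=
    exists_pos_forall_le fun p : Fin q × Fin q => div_pos (hA p.1 p.2) (hrow p.1)
  refine ⟨κ, hκ, fun x hx i => ?_⟩
  change κ * (A *ᵥ 1) i ≤ A i ⬝ᵥ x
  rw [dotProduct_comm]
  exact hx.le_dotProduct fun j => (le_div_iff₀ (hrow i)).1 (hκle (i, j))

lemma exists_abs_log_dotProduct_mul_mulVec_sub_le {A : Mat q} (hA : memS0 A) :
    ∃ M, ∀ C : Mat q, (∀ i j, 0 ≤ C i j) → ∀ x y, inBbar x → inCbar y →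
      |Real.log (y ⬝ᵥ (C * A) *ᵥ x) - Real.log (y ⬝ᵥ (C * A) *ᵥ 1)| ≤ M := by
  obtain ⟨κ, hκ, hcone⟩ := exists_pos_smul_mulVec_one_le_mulVec hA
  refine ⟨|Real.log κ|, fun C hC x y hx hy => ?_⟩
  have hz : 0 ≤ y ᵥ* C := fun j => dotProduct_nonneg_of_nonneg hy fun i => hC i j
  have hdot : ∀ w, y ⬝ᵥ (C * A) *ᵥ w = (y ᵥ* C) ⬝ᵥ A *ᵥ w := fun w => by
    rw [← Matrix.mulVec_mulVec, Matrix.dotProduct_mulVec]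
  rw [hdot, hdot]
  refine abs_log_sub_log_le hκ
    (dotProduct_nonneg_of_nonneg hz fun i => (hA.memS.mulVec_one_pos i).le) ?_
    (dotProduct_le_dotProduct_of_nonneg_left (mulVec_le_mulVec_one hA.memS.1 hx) hz)
  calc κ * ((y ᵥ* C) ⬝ᵥ A *ᵥ 1) = (y ᵥ* C) ⬝ᵥ κ • A *ᵥ 1 := by rw [dotProduct_smul, smul_eq_mul]
    _ ≤ (y ᵥ* C) ⬝ᵥ A *ᵥ x := dotProduct_le_dotProduct_of_nonneg_left (hcone x hx) hz

end Bounds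

theorem statement2_general {q : ℕ} {Ω : Type} (X : ℕ → Ω → Mat q)
    (hS : ∀ n, 1 ≤ n → ∀ ω', memS (X n ω')) (ω : Ω) (hT : hitT X ω < ⊤) :
    (∀ n : ℕ, hitT X ω ≤ (n : ℕ∞) → memS0 (Xprod X n ω)) ∧
    ∃ M : ℝ, ∀ n : ℕ, 1 ≤ n → ∀ x y : Fin q → ℝ, inBbar x → inBbar y →
      |indT X n ω * Real.log (y ⬝ᵥ (Xprod X n ω).mulVec x)
        - Real.log (nrm ((Yprod X n ω).mulVec y))| ≤ M := by
  have hX : ∀ k, 1 ≤ k → memS (X k ω) := fun k hk => hS k hk ω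
  obtain ⟨n₀, hA₀, hT₀⟩ := exists_memS0_Xprod_of_hitT_lt_top hT
  have hle : ∀ n : ℕ, hitT X ω ≤ n ↔ n₀ ≤ n := fun n => by rw [hT₀, Nat.cast_le]
  refine ⟨fun n hn => ?_, ?_⟩
  · obtain ⟨C, hC, he⟩ := exists_memS_mul_Xprod hX ((hle n).1 hn)
    exact he ▸ memS0_mul hC hA₀
  obtain ⟨M₁, hM₁⟩ := exists_abs_log_dotProduct_mul_mulVec_sub_le hA₀
  choose M hM using fun n => exists_abs_log_dotProduct_mulVec_one_le (memS_Xprod hX n)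
  obtain ⟨M₂, hM₂⟩ := Finite.exists_le fun n : Fin n₀ => M n
  refine ⟨max M₁ M₂, fun n _ x y hx hy => ?_⟩
  rw [Yprod_eq_transpose, nrm_transpose_mulVec (memS_Xprod hX n).1 hy.1, indT]
  split_ifs with hn
  · obtain ⟨C, hC, he⟩ := exists_memS_mul_Xprod hX ((hle n).1 hn)
    rw [one_mul, he]
    exact (hM₁ C hC.1 x y hx hy.1).trans (le_max_left _ _)
  · rw [zero_mul, zero_sub, abs_neg]
    have hn' : n < n₀ := by rw [hle] at hn; omega
    exact (hM n y hy).trans ((hM₂ ⟨n, hn'⟩).trans (le_max_right _ _))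

/-- **Lemma II.1 (i)-(ii).** If `T(ω) < ∞` then `X^{(n)}(ω) ∈ S°` for all
`n ≥ T(ω)`, and the quantities `D_n(ω)` are uniformly bounded in `n`. -/
theorem statement2 {q : ℕ} (hq : 1 ≤ q) {Ω : Type} (X : ℕ → Ω → Mat q)
    (hS : ∀ n, 1 ≤ n → ∀ ω', memS (X n ω')) (ω : Ω) (hT : hitT X ω < ⊤) :
    (∀ n : ℕ, hitT X ω ≤ (n : ℕ∞) → memS0 (Xprod X n ω)) ∧
    ∃ M : ℝ, ∀ n : ℕ, 1 ≤ n → ∀ x y : Fin q → ℝ, inBbar x → inBbar y →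
      |indT X n ω * Real.log (y ⬝ᵥ (Xprod X n ω).mulVec x)
        - Real.log (nrm ((Yprod X n ω).mulVec y))| ≤ M :=
  statement2_general X hS ω hT

end StablePaper
end
end

section
/- For every t ∈ ℝ, the Fourier kernel P_t defines a bounded linear operator on the Banach space L, and ‖P_t − P‖_L = O(ε(t) + |t|) as t → 0; more precisely, there is a universal constant C' such that ‖P_t − P‖_L ≤ 4ε(t) + C'|t| for all t ∈ ℝ. -/
/-!
The multiplier `e^{itξ(g,x)}` differs from `1` by at most `min(|t| ℓ(g), 2)`, since `v(g) ≤ ‖gx‖ ≤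
‖g‖`; integrating against `μ` bounds the sup norm of `(P_t - P) f` by `ε(t) ‖f‖_u`. For the
Lipschitz seminorm, write `(e^{itξ(g,x)} - 1) f(g·x) - (e^{itξ(g,y)} - 1) f(g·y)` as
`(e^{itξ(g,x)} - e^{itξ(g,y)}) f(g·x) + (e^{itξ(g,y)} - 1) (f(g·x) - f(g·y))`. The second term is
controlled by `m(f)` because every `g ∈ S` contracts `d`. For the first, either `x` and `y` are
close, `m(x,y) m(y,x) ≥ 1/5`, and then `|ξ(g,x) - ξ(g,y)| ≤ -ln(m(x,y) m(y,x)) ≤ 10 d(x,y)`; or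
they are far, `d(x,y) ≥ 2/3`, and the crude bound `|ξ(g,x) - ξ(g,y)| ≤ 2 ℓ(g)` suffices. This
gives `C' = 10`.
-/

open MeasureTheory ProbabilityTheory Filter Topology Matrix Finset

noncomputable section

namespace StablePaper

variable {q : ℕ}

section Cone

lemma nrm_eq_sum {x : Fin q → ℝ} (hx : inCbar x) : nrm x = ∑ i, x i :=
  Finset.sum_congr rfl fun i _ => abs_of_nonneg (hx i)

lemma inBbar.exists_pos {x : Fin q → ℝ} (hx : inBbar x) : ∃ i, 0 < x i := by
  by_contra! h
  have := Finset.sum_nonpos fun i (_ : i ∈ Finset.univ) => h i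
  rw [← nrm_eq_sum hx.1, hx.2] at this
  norm_num at this

def colSum (g : Mat q) (j : Fin q) : ℝ := ∑ i, g i j

lemma mulVec_nonneg {g : Mat q} {x : Fin q → ℝ} (hg : ∀ i j, 0 ≤ g i j) (hx : inCbar x) :
    inCbar (g *ᵥ x) := by
  intro i
  simp only [Matrix.mulVec, dotProduct]
  exact Finset.sum_nonneg fun j _ => mul_nonneg (hg i j) (hx j)

lemma nrm_mulVec_eq_sum_colSum {g : Mat q} {x : Fin q → ℝ} (hg : ∀ i j, 0 ≤ g i j)
    (hx : inCbar x) : nrm (g *ᵥ x) = ∑ j, colSum g j * x j := by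
  rw [nrm_eq_sum (mulVec_nonneg hg hx)]
  simp only [Matrix.mulVec, dotProduct, colSum, Finset.sum_mul]
  exact Finset.sum_comm

lemma memS.colSum_pos {g : Mat q} (hg : memS g) (j : Fin q) : 0 < colSum g j := by
  obtain ⟨i, hi⟩ := hg.2.2 j
  exact hi.trans_le (Finset.single_le_sum (fun i _ => hg.1 i j) (Finset.mem_univ i))

lemma memS.nrm_mulVec_pos {g : Mat q} {x : Fin q → ℝ} (hg : memS g) (hx : inBbar x) :
    0 < nrm (g *ᵥ x) := by
  obtain ⟨j, hj⟩ := hx.exists_pos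
  rw [nrm_mulVec_eq_sum_colSum hg.1 hx.1]
  exact Finset.sum_pos' (fun j _ => mul_nonneg (hg.colSum_pos j).le (hx.1 j))
    ⟨j, Finset.mem_univ j, mul_pos (hg.colSum_pos j) hj⟩

lemma memS.proj_pos_iff {g : Mat q} {x : Fin q → ℝ} (hg : memS g) (hx : inBbar x) (i : Fin q) :
    0 < proj g x i ↔ 0 < (g *ᵥ x) i :=
  div_pos_iff_of_pos_right (hg.nrm_mulVec_pos hx)

lemma memS.proj_mem {g : Mat q} {x : Fin q → ℝ} (hg : memS g) (hx : inBbar x) :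
    inBbar (proj g x) := by
  have hN := hg.nrm_mulVec_pos hx
  have hcone : inCbar (proj g x) := fun i => div_nonneg (mulVec_nonneg hg.1 hx.1 i) hN.le
  refine ⟨hcone, ?_⟩
  rw [nrm_eq_sum hcone]
  unfold proj
  rw [← Finset.sum_div, ← nrm_eq_sum (mulVec_nonneg hg.1 hx.1),
    div_self hN.ne']

lemma inBbar_single (j : Fin q) : inBbar (Pi.single j 1 : Fin q → ℝ) := by
  refine ⟨fun i => ?_, ?_⟩
  · rcases eq_or_ne i j with rfl | h
    · simp
    · simp [h]
  · rw [nrm, Finset.sum_eq_single j (fun i _ h => by simp [h]) (by simp)]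
    simp

lemma nrm_mulVec_single {g : Mat q} (hg : ∀ i j, 0 ≤ g i j) (j : Fin q) :
    nrm (g *ᵥ Pi.single j 1) = colSum g j := by
  rw [nrm_mulVec_eq_sum_colSum hg (inBbar_single j).1]
  simp [Pi.single_apply]

end Cone

section Hilbert

lemma mfun_le_div (x : Fin q → ℝ) {y : Fin q → ℝ} {i : Fin q} (hi : 0 < y i) :
    mfun x y ≤ x i / y i :=
  csInf_le (Set.toFinite _).bddBelow ⟨i, hi, rfl⟩

lemma le_mfun {x y : Fin q → ℝ} {c : ℝ} (hy : ∃ i, 0 < y i)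
    (hc : ∀ i, 0 < y i → c ≤ x i / y i) : c ≤ mfun x y := by
  obtain ⟨i, hi⟩ := hy
  exact le_csInf ⟨_, i, hi, rfl⟩ (by rintro _ ⟨j, hj, rfl⟩; exact hc j hj)

lemma mfun_nonneg {x y : Fin q → ℝ} (hx : inCbar x) (hy : inBbar y) : 0 ≤ mfun x y :=
  le_mfun hy.exists_pos fun i _ => div_nonneg (hx i) (hy.1 i)

lemma mfun_mul_le {x y : Fin q → ℝ} (hx : inCbar x) (hy : inCbar y) (i : Fin q) :
    mfun x y * y i ≤ x i := by
  rcases (hy i).eq_or_lt with h | h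
  · rw [← h, mul_zero]
    exact hx i
  · exact (le_div_iff₀ h).1 (mfun_le_div x h)

lemma mfun_le_one {x y : Fin q → ℝ} (hx : inBbar x) (hy : inBbar y) : mfun x y ≤ 1 := by
  have h : mfun x y * nrm y ≤ nrm x := by
    rw [nrm_eq_sum hx.1, nrm_eq_sum hy.1, Finset.mul_sum]
    exact Finset.sum_le_sum fun i _ => mfun_mul_le hx.1 hy.1 i
  rwa [hx.2, hy.2, mul_one] at h

lemma mfun_mul_mfun_nonneg {x y : Fin q → ℝ} (hx : inBbar x) (hy : inBbar y) :
    0 ≤ mfun x y * mfun y x :=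
  mul_nonneg (mfun_nonneg hx.1 hy) (mfun_nonneg hy.1 hx)

lemma mfun_mul_mfun_le_one {x y : Fin q → ℝ} (hx : inBbar x) (hy : inBbar y) :
    mfun x y * mfun y x ≤ 1 :=
  mul_le_one₀ (mfun_le_one hx hy) (mfun_nonneg hy.1 hx) (mfun_le_one hy hx)

lemma one_sub_div_one_add_le_of_le {a b : ℝ} (ha : 0 ≤ a) (hab : a ≤ b) :
    (1 - b) / (1 + b) ≤ (1 - a) / (1 + a) := by
  rw [div_le_div_iff₀ (by linarith) (by linarith)]
  nlinarith

lemma dB_nonneg {x y : Fin q → ℝ} (hx : inBbar x) (hy : inBbar y) : 0 ≤ dB x y := by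
  have := mfun_mul_mfun_nonneg hx hy
  have := mfun_mul_mfun_le_one hx hy
  exact div_nonneg (by linarith) (by linarith)

lemma dB_le_one {x y : Fin q → ℝ} (hx : inBbar x) (hy : inBbar y) : dB x y ≤ 1 := by
  have := mfun_mul_mfun_nonneg hx hy
  exact div_le_one_of_le₀ (by linarith) (by linarith)

lemma one_sub_mfun_mul_mfun_le {x y : Fin q → ℝ} (hx : inBbar x) (hy : inBbar y) :
    1 - mfun x y * mfun y x ≤ 2 * dB x y := by
  have := mfun_mul_mfun_nonneg hx hy
  have := mfun_mul_mfun_le_one hx hy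
  rw [dB, ← mul_div_assoc, le_div_iff₀ (by linarith)]
  nlinarith

lemma two_thirds_le_dB {x y : Fin q → ℝ} (hx : inBbar x) (hy : inBbar y)
    (hs : mfun x y * mfun y x < 1 / 5) : 2 / 3 ≤ dB x y := by
  have := one_sub_div_one_add_le_of_le (mfun_mul_mfun_nonneg hx hy) hs.le
  norm_num at this
  exact this

lemma mfun_mul_mulVec_le {g : Mat q} {x y : Fin q → ℝ} (hg : ∀ i j, 0 ≤ g i j)
    (hx : inCbar x) (hy : inCbar y) (i : Fin q) :
    mfun x y * (g *ᵥ y) i ≤ (g *ᵥ x) i := by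
  simp only [Matrix.mulVec, dotProduct, Finset.mul_sum]
  refine Finset.sum_le_sum fun j _ => ?_
  rw [mul_left_comm]
  exact mul_le_mul_of_nonneg_left (mfun_mul_le hx hy j) (hg i j)

lemma mfun_mul_nrm_mulVec_le {g : Mat q} {x y : Fin q → ℝ} (hg : ∀ i j, 0 ≤ g i j)
    (hx : inCbar x) (hy : inCbar y) :
    mfun x y * nrm (g *ᵥ y) ≤ nrm (g *ᵥ x) := by
  rw [nrm_eq_sum (mulVec_nonneg hg hx), nrm_eq_sum (mulVec_nonneg hg hy), Finset.mul_sum]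
  exact Finset.sum_le_sum fun i _ => mfun_mul_mulVec_le hg hx hy i

lemma memS.mfun_mul_le_mfun_proj {g : Mat q} {x y : Fin q → ℝ} (hg : memS g)
    (hx : inBbar x) (hy : inBbar y) :
    mfun x y * (nrm (g *ᵥ y) / nrm (g *ᵥ x)) ≤ mfun (proj g x) (proj g y) := by
  have hNx := hg.nrm_mulVec_pos hx
  have hNy := hg.nrm_mulVec_pos hy
  refine le_mfun (hg.proj_mem hy).exists_pos fun i hi => ?_
  have hyi : 0 < (g *ᵥ y) i := (hg.proj_pos_iff hy i).1 hi
  have hdiv : proj g x i / proj g y i =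
      (g *ᵥ x) i / (g *ᵥ y) i * (nrm (g *ᵥ y) / nrm (g *ᵥ x)) := by
    simp only [proj]
    field_simp
  rw [hdiv]
  gcongr
  exact (le_div_iff₀ hyi).2 (mfun_mul_mulVec_le hg.1 hx.1 hy.1 i)

lemma memS.mfun_mul_mfun_le_proj {g : Mat q} {x y : Fin q → ℝ} (hg : memS g)
    (hx : inBbar x) (hy : inBbar y) :
    mfun x y * mfun y x ≤ mfun (proj g x) (proj g y) * mfun (proj g y) (proj g x) := by
  have hNx := hg.nrm_mulVec_pos hx
  have hNy := hg.nrm_mulVec_pos hy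
  calc mfun x y * mfun y x
      = (mfun x y * (nrm (g *ᵥ y) / nrm (g *ᵥ x))) *
          (mfun y x * (nrm (g *ᵥ x) / nrm (g *ᵥ y))) := by
        field_simp
    _ ≤ _ := by
        have hxy := hg.mfun_mul_le_mfun_proj hx hy
        exact mul_le_mul hxy (hg.mfun_mul_le_mfun_proj hy hx)
          (mul_nonneg (mfun_nonneg hy.1 hx) (by positivity))
          ((mul_nonneg (mfun_nonneg hx.1 hy) (by positivity)).trans hxy)

lemma memS.dB_proj_le {g : Mat q} {x y : Fin q → ℝ} (hg : memS g)
    (hx : inBbar x) (hy : inBbar y) : dB (proj g x) (proj g y) ≤ dB x y :=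
  one_sub_div_one_add_le_of_le (mfun_mul_mfun_nonneg hx hy) (hg.mfun_mul_mfun_le_proj hx hy)

end Hilbert

section Cocycle

lemma memS.abs_xi_sub_le_neg_log {g : Mat q} {x y : Fin q → ℝ} (hg : memS g)
    (hx : inBbar x) (hy : inBbar y) (hs : 0 < mfun x y * mfun y x) :
    |xi g x - xi g y| ≤ -Real.log (mfun x y * mfun y x) := by
  have hmxy : 0 < mfun x y := pos_of_mul_pos_left hs (mfun_nonneg hy.1 hx)
  have hmyx : 0 < mfun y x := pos_of_mul_pos_right hs (mfun_nonneg hx.1 hy)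
  have hNx := hg.nrm_mulVec_pos hx
  have hNy := hg.nrm_mulVec_pos hy
  have hxy : Real.log (mfun x y) + xi g y ≤ xi g x := by
    rw [xi, xi, ← Real.log_mul hmxy.ne' hNy.ne']
    exact Real.log_le_log (by positivity) (mfun_mul_nrm_mulVec_le hg.1 hx.1 hy.1)
  have hyx : Real.log (mfun y x) + xi g x ≤ xi g y := by
    rw [xi, xi, ← Real.log_mul hmyx.ne' hNx.ne']
    exact Real.log_le_log (by positivity) (mfun_mul_nrm_mulVec_le hg.1 hy.1 hx.1)
  have := Real.log_nonpos hmxy.le (mfun_le_one hx hy)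
  have := Real.log_nonpos hmyx.le (mfun_le_one hy hx)
  rw [Real.log_mul hmxy.ne' hmyx.ne', abs_le]
  constructor <;> linarith

lemma memS.abs_xi_sub_le_ten_mul_dB {g : Mat q} {x y : Fin q → ℝ} (hg : memS g)
    (hx : inBbar x) (hy : inBbar y) (hs : 1 / 5 ≤ mfun x y * mfun y x) :
    |xi g x - xi g y| ≤ 10 * dB x y := by
  set s := mfun x y * mfun y x
  have hs0 : 0 < s := by linarith
  -- `-log s = log s⁻¹ ≤ s⁻¹ - 1 = (1 - s) / s ≤ 5 (1 - s)`
  have hlog : -Real.log s ≤ 5 * (1 - s) := by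
    have h := Real.log_le_sub_one_of_pos (inv_pos.2 hs0)
    rw [Real.log_inv] at h
    have : s⁻¹ - 1 ≤ 5 * (1 - s) := by
      rw [inv_eq_one_div, div_sub_one hs0.ne', div_le_iff₀ hs0]
      nlinarith [mfun_mul_mfun_le_one hx hy]
    linarith
  linarith [hg.abs_xi_sub_le_neg_log hx hy hs0, one_sub_mfun_mul_mfun_le hx hy]

lemma ellg_nonneg (g : Mat q) : 0 ≤ ellg g := add_nonneg (abs_nonneg _) (abs_nonneg _)

lemma min_mul_ellg_nonneg (t : ℝ) (g : Mat q) : 0 ≤ min (|t| * ellg g) 2 :=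
  le_min (mul_nonneg (abs_nonneg t) (ellg_nonneg g)) two_pos.le

lemma epsT_nonneg (μ : Measure (Mat q)) (t : ℝ) : 0 ≤ epsT μ t :=
  integral_nonneg (min_mul_ellg_nonneg t)

variable [NeZero q]

lemma inf'_colSum_le_nrm_mulVec {g : Mat q} {x : Fin q → ℝ} (hg : ∀ i j, 0 ≤ g i j)
    (hx : inBbar x) : univ.inf' univ_nonempty (colSum g) ≤ nrm (g *ᵥ x) := by
  rw [nrm_mulVec_eq_sum_colSum hg hx.1]
  calc univ.inf' univ_nonempty (colSum g)
      = ∑ j, univ.inf' univ_nonempty (colSum g) * x j := by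
        rw [← Finset.mul_sum, ← nrm_eq_sum hx.1, hx.2, mul_one]
    _ ≤ ∑ j, colSum g j * x j := Finset.sum_le_sum fun j _ =>
        mul_le_mul_of_nonneg_right (Finset.inf'_le _ (Finset.mem_univ j)) (hx.1 j)

lemma nrm_mulVec_le_sup'_colSum {g : Mat q} {x : Fin q → ℝ} (hg : ∀ i j, 0 ≤ g i j)
    (hx : inBbar x) : nrm (g *ᵥ x) ≤ univ.sup' univ_nonempty (colSum g) := by
  rw [nrm_mulVec_eq_sum_colSum hg hx.1]
  calc ∑ j, colSum g j * x j
      ≤ ∑ j, univ.sup' univ_nonempty (colSum g) * x j :=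
        Finset.sum_le_sum fun j _ =>
          mul_le_mul_of_nonneg_right (Finset.le_sup' _ (Finset.mem_univ j)) (hx.1 j)
    _ = univ.sup' univ_nonempty (colSum g) := by
        rw [← Finset.mul_sum, ← nrm_eq_sum hx.1, hx.2, mul_one]

lemma opg_eq_sup'_colSum {g : Mat q} (hg : ∀ i j, 0 ≤ g i j) :
    opg g = univ.sup' univ_nonempty (colSum g) := by
  obtain ⟨j, -, hj⟩ := Finset.exists_mem_eq_sup' Finset.univ_nonempty (colSum g)
  refine IsGreatest.csSup_eq ⟨⟨_, inBbar_single j, by rw [hj, nrm_mulVec_single hg]⟩, ?_⟩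
  rintro _ ⟨x, hx, rfl⟩
  exact nrm_mulVec_le_sup'_colSum hg hx

lemma vg_eq_inf'_colSum {g : Mat q} (hg : ∀ i j, 0 ≤ g i j) :
    vg g = univ.inf' univ_nonempty (colSum g) := by
  obtain ⟨j, -, hj⟩ := Finset.exists_mem_eq_inf' Finset.univ_nonempty (colSum g)
  refine IsLeast.csInf_eq ⟨⟨_, inBbar_single j, by rw [hj, nrm_mulVec_single hg]⟩, ?_⟩
  rintro _ ⟨x, hx, rfl⟩
  exact inf'_colSum_le_nrm_mulVec hg hx

lemma memS.abs_xi_le_ellg {g : Mat q} {x : Fin q → ℝ} (hg : memS g) (hx : inBbar x) :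
    |xi g x| ≤ ellg g := by
  have hinf : 0 < univ.inf' univ_nonempty (colSum g) :=
    (Finset.lt_inf'_iff _).2 fun j _ => hg.colSum_pos j
  have hlow := inf'_colSum_le_nrm_mulVec hg.1 hx
  have hup := nrm_mulVec_le_sup'_colSum hg.1 hx
  rw [ellg, opg_eq_sup'_colSum hg.1, vg_eq_inf'_colSum hg.1]
  refine (abs_le_max_abs_abs (Real.log_le_log hinf hlow)
    (Real.log_le_log (hinf.trans_le hlow) hup)).trans ?_
  rw [max_comm]
  exact max_le_add_of_nonneg (abs_nonneg _) (abs_nonneg _)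

lemma memS.min_mul_abs_xi_sub_le {g : Mat q} {x y : Fin q → ℝ} (hg : memS g)
    (hx : inBbar x) (hy : inBbar y) (t : ℝ) :
    min (|t| * |xi g x - xi g y|) 2 ≤ (3 * min (|t| * ellg g) 2 + 10 * |t|) * dB x y := by
  have hd := dB_nonneg hx hy
  have hm := min_mul_ellg_nonneg t g
  rcases le_or_gt (1 / 5) (mfun x y * mfun y x) with hs | hs
  · calc min (|t| * |xi g x - xi g y|) 2
        ≤ |t| * (10 * dB x y) := (min_le_left _ _).trans
          (mul_le_mul_of_nonneg_left (hg.abs_xi_sub_le_ten_mul_dB hx hy hs) (abs_nonneg t))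
      _ ≤ (3 * min (|t| * ellg g) 2 + 10 * |t|) * dB x y := by nlinarith
  · have hxi : |xi g x - xi g y| ≤ 2 * ellg g :=
      (abs_sub _ _).trans (by linarith [hg.abs_xi_le_ellg hx, hg.abs_xi_le_ellg hy])
    have h2 : min (|t| * |xi g x - xi g y|) 2 ≤ 2 * min (|t| * ellg g) 2 := by
      rw [mul_min_of_nonneg _ _ (by norm_num : (0:ℝ) ≤ 2)]
      refine min_le_min ?_ (by norm_num)
      nlinarith [abs_nonneg t]
    nlinarith [two_thirds_le_dB hx hy hs, abs_nonneg t]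

end Cocycle

lemma norm_exp_I_mul_sub_exp_I_mul_le (a b : ℝ) :
    ‖Complex.exp (Complex.I * a) - Complex.exp (Complex.I * b)‖ ≤ min |a - b| 2 := by
  refine le_min ?_ ?_
  · have h : Complex.exp (Complex.I * a) - Complex.exp (Complex.I * b) =
        Complex.exp (Complex.I * b) * (Complex.exp (Complex.I * ↑(a - b)) - 1) := by
      rw [mul_sub, mul_one, ← Complex.exp_add]
      push_cast
      ring_nf
    rw [h, norm_mul, Complex.norm_exp_I_mul_ofReal, one_mul]
    exact Real.norm_exp_I_mul_ofReal_sub_one_le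
  · refine (norm_sub_le _ _).trans ?_
    rw [Complex.norm_exp_I_mul_ofReal, Complex.norm_exp_I_mul_ofReal]
    norm_num

section LipschitzSpace

variable {f : (Fin q → ℝ) → ℂ}

lemma supnorm_nonneg (f : (Fin q → ℝ) → ℂ) : 0 ≤ supnorm f :=
  Real.sSup_nonneg fun _ ⟨_, _, hr⟩ => hr ▸ norm_nonneg _

lemma mlip_nonneg (f : (Fin q → ℝ) → ℂ) : 0 ≤ mlip f :=
  Real.sSup_nonneg fun _ ⟨_, _, hx, hy, _, hr⟩ =>
    hr ▸ div_nonneg (norm_nonneg _) (dB_nonneg hx hy)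

lemma memL.norm_le_supnorm (hf : memL f) {z : Fin q → ℝ} (hz : inBbar z) :
    ‖f z‖ ≤ supnorm f := by
  obtain ⟨M, hM⟩ := hf
  refine le_csSup ⟨‖f z‖ + |M|, ?_⟩ ⟨z, hz, rfl⟩
  rintro _ ⟨x, hx, rfl⟩
  have hd := dB_le_one hx hz
  have hd0 := dB_nonneg hx hz
  calc ‖f x‖ ≤ ‖f z‖ + ‖f x - f z‖ := norm_le_insert' _ _
    _ ≤ ‖f z‖ + |M| := by
        have := hM x z hx hz
        nlinarith [le_abs_self M, abs_nonneg M]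

lemma memL.norm_sub_le_mlip (hf : memL f) {x y : Fin q → ℝ} (hx : inBbar x) (hy : inBbar y) :
    ‖f x - f y‖ ≤ mlip f * dB x y := by
  obtain ⟨M, hM⟩ := hf
  rcases eq_or_ne x y with rfl | hxy
  · simpa using mul_nonneg (mlip_nonneg f) (dB_nonneg hx hx)
  rcases (dB_nonneg hx hy).eq_or_lt with hd | hd
  · simpa [← hd] using hM x y hx hy
  have hbdd : BddAbove {r : ℝ | ∃ x y, inBbar x ∧ inBbar y ∧ x ≠ y ∧
      r = ‖f x - f y‖ / dB x y} := by
    refine ⟨|M|, ?_⟩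
    rintro _ ⟨u, v, hu, hv, -, rfl⟩
    exact div_le_of_le_mul₀ (dB_nonneg hu hv) (abs_nonneg M)
      ((hM u v hu hv).trans (mul_le_mul_of_nonneg_right (le_abs_self M) (dB_nonneg hu hv)))
  exact (div_le_iff₀ hd).1 (le_csSup hbdd ⟨x, y, hx, hy, hxy, rfl⟩)

lemma normL_le {a b : ℝ} (ha : 0 ≤ a) (hb : 0 ≤ b) (hsup : ∀ x, inBbar x → ‖f x‖ ≤ a)
    (hlip : ∀ x y, inBbar x → inBbar y → ‖f x - f y‖ ≤ b * dB x y) :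
    normL f ≤ a + b := by
  refine add_le_add (Real.sSup_le (fun _ ⟨x, hx, hr⟩ => hr ▸ hsup x hx) ha)
    (Real.sSup_le ?_ hb)
  rintro _ ⟨x, y, hx, hy, -, rfl⟩
  exact div_le_of_le_mul₀ (dB_nonneg hx hy) hb (hlip x y hx hy)

def faceB (R : Finset (Fin q)) : Set (Fin q → ℝ) :=
  {y | inBbar y ∧ ∀ i, 0 < y i ↔ i ∈ R}

lemma measurableSet_faceB (R : Finset (Fin q)) : MeasurableSet (faceB R) := by
  unfold faceB inBbar inCbar nrm
  measurability

lemma mfun_eq_inf' {R : Finset (Fin q)} (hR : R.Nonempty) (x : Fin q → ℝ) {y : Fin q → ℝ}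
    (hy : ∀ i, 0 < y i ↔ i ∈ R) : mfun x y = R.inf' hR fun i => x i / y i := by
  rw [Finset.inf'_eq_csInf_image, mfun]
  congr
  ext i
  exact hy i

/-- `d` jumps between faces of `B̄`, so `f` need not be continuous on `B̄`, but it is on each
face. -/
lemma memL.continuousOn_faceB (hf : memL f) (R : Finset (Fin q)) : ContinuousOn f (faceB R) := by
  intro v hv
  obtain ⟨M, hM⟩ := hf
  obtain ⟨i₀, hi₀⟩ := hv.1.exists_pos
  have hR : R.Nonempty := ⟨i₀, (hv.2 i₀).1 hi₀⟩
  have hvR : ∀ i ∈ R, v i ≠ 0 := fun i hi => ((hv.2 i).2 hi).ne'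
  set s : (Fin q → ℝ) → ℝ :=
    fun y => (R.inf' hR fun i => y i / v i) * R.inf' hR fun i => v i / y i
  have hs : ContinuousWithinAt s (faceB R) v :=
    (ContinuousWithinAt.finset_inf'_apply hR fun i _ =>
        ((continuous_apply i).div_const _).continuousWithinAt).mul
      (ContinuousWithinAt.finset_inf'_apply hR fun i hi =>
        (continuousAt_const.div (continuous_apply i).continuousAt (hvR i hi)).continuousWithinAt)
  have hsv : s v = 1 := by
    simp only [s, Finset.inf'_congr hR rfl fun i hi => div_self (hvR i hi), Finset.inf'_const,
      mul_one]
  have hs1 : Tendsto s (𝓝[faceB R] v) (𝓝 1) := hsv ▸ hs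
  have hd : Tendsto (fun y => M * ((1 - s y) / (1 + s y))) (𝓝[faceB R] v) (𝓝 0) := by
    simpa using (((tendsto_const_nhds (x := (1 : ℝ))).sub hs1).div
      ((tendsto_const_nhds (x := (1 : ℝ))).add hs1) (by norm_num)).const_mul M
  rw [ContinuousWithinAt, tendsto_iff_norm_sub_tendsto_zero]
  refine squeeze_zero' (Eventually.of_forall fun _ => norm_nonneg _) ?_ hd
  filter_upwards [self_mem_nhdsWithin] with y hy
  have := hM y v hy.1 hv.1
  rwa [dB, mfun_eq_inf' hR _ hv.2, mfun_eq_inf' hR _ hy.2] at this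

end LipschitzSpace

section Measurability

instance : BorelSpace (Mat q) := Pi.borelSpace

lemma measurableSet_memS : MeasurableSet {g : Mat q | memS g} := by
  unfold memS
  measurability

lemma measurable_proj (x : Fin q → ℝ) : Measurable fun g : Mat q => proj g x := by
  unfold proj nrm
  fun_prop

lemma continuousOn_proj (x : Fin q → ℝ) :
    ContinuousOn (fun g : Mat q => proj g x) {g | nrm (g *ᵥ x) ≠ 0} := by
  have hmul : Continuous fun g : Mat q => g *ᵥ x := continuous_id.matrix_mulVec continuous_const
  have hnrm : Continuous (nrm (q := q)) := by
    unfold nrm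
    fun_prop
  exact continuousOn_pi.2 fun i => ((continuous_apply i).comp hmul).continuousOn.div
    (hnrm.comp hmul).continuousOn fun _ hg => hg

/-- On `S`, `g ↦ f (g · x)` is continuous on each of the finitely many measurable pieces where
the support of `g x` is fixed. -/
lemma memL.aestronglyMeasurable_comp_proj {f : (Fin q → ℝ) → ℂ} (hf : memL f)
    {x : Fin q → ℝ} (hx : inBbar x) {μ : Measure (Mat q)} (hS : ∀ᵐ g ∂μ, memS g) :
    AEStronglyMeasurable (fun g => f (proj g x)) μ := by
  set piece : Finset (Fin q) → Set (Mat q) :=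
    fun R => {g | memS g} ∩ (fun g => proj g x) ⁻¹' faceB R
  have hcover : ∀ᵐ g ∂μ, g ∈ ⋃ R, piece R := by
    filter_upwards [hS] with g hg
    exact Set.mem_iUnion.2 ⟨Finset.univ.filter fun i => 0 < proj g x i, hg,
      hg.proj_mem hx, by simp⟩
  rw [← Measure.restrict_eq_self_of_ae_mem hcover, aestronglyMeasurable_iUnion_iff]
  intro R
  refine ContinuousOn.aestronglyMeasurable ?_
    (measurableSet_memS.inter (measurableSet_faceB R |>.preimage (measurable_proj x)))
  exact (hf.continuousOn_faceB R).comp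
    ((continuousOn_proj x).mono fun g hg => (hg.1.nrm_mulVec_pos hx).ne') fun g hg => hg.2

lemma aemeasurable_ellg [NeZero q] {μ : Measure (Mat q)} (hS : ∀ᵐ g ∂μ, memS g) :
    AEMeasurable ellg μ := by
  have hcol : ∀ j ∈ Finset.univ, Continuous fun g : Mat q => colSum g j := fun j _ => by
    unfold colSum
    fun_prop
  refine AEMeasurable.congr (f := fun g => |Real.log (univ.sup' univ_nonempty
      (colSum g))| + |Real.log (univ.inf' univ_nonempty (colSum g))|) ?_ ?_
  · exact ((Real.measurable_log.comp (Continuous.finset_sup'_apply _ hcol).measurable).abs.add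
      (Real.measurable_log.comp (Continuous.finset_inf'_apply _ hcol).measurable).abs).aemeasurable
  · filter_upwards [hS] with g hg
    rw [ellg, opg_eq_sup'_colSum hg.1, vg_eq_inf'_colSum hg.1]

end Measurability

section FourierKernel

def expXi (t : ℝ) (g : Mat q) (x : Fin q → ℝ) : ℂ :=
  Complex.exp (Complex.I * (t : ℂ) * (xi g x : ℂ))

lemma Ptop_eq (μ : Measure (Mat q)) (t : ℝ) (f : (Fin q → ℝ) → ℂ) (x : Fin q → ℝ) :
    Ptop μ t f x = ∫ g, expXi t g x * f (proj g x) ∂μ := rfl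

lemma expXi_eq (t : ℝ) (g : Mat q) (x : Fin q → ℝ) :
    expXi t g x = Complex.exp (Complex.I * ↑(t * xi g x)) := by
  rw [expXi]
  push_cast
  ring_nf

lemma expXi_zero (g : Mat q) (x : Fin q → ℝ) : expXi 0 g x = 1 := by
  simp [expXi]

lemma norm_expXi (t : ℝ) (g : Mat q) (x : Fin q → ℝ) : ‖expXi t g x‖ = 1 := by
  rw [expXi_eq, Complex.norm_exp_I_mul_ofReal]

lemma norm_expXi_sub_expXi_le (t : ℝ) (g : Mat q) (x y : Fin q → ℝ) :
    ‖expXi t g x - expXi t g y‖ ≤ min (|t| * |xi g x - xi g y|) 2 := by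
  rw [expXi_eq, expXi_eq, ← abs_mul, mul_sub]
  exact norm_exp_I_mul_sub_exp_I_mul_le _ _

variable {μ : Measure (Mat q)} [IsProbabilityMeasure μ] {f : (Fin q → ℝ) → ℂ}

lemma integrable_expXi_mul (hS : ∀ᵐ g ∂μ, memS g) (hf : memL f) {x : Fin q → ℝ}
    (hx : inBbar x) (t : ℝ) : Integrable (fun g => expXi t g x * f (proj g x)) μ := by
  have hexp : Measurable fun g : Mat q => expXi t g x := by
    unfold expXi xi nrm
    fun_prop
  refine Integrable.of_bound (hexp.aestronglyMeasurable.mul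
    (hf.aestronglyMeasurable_comp_proj hx hS)) (supnorm f) ?_
  filter_upwards [hS] with g hg
  rw [norm_mul, norm_expXi, one_mul]
  exact hf.norm_le_supnorm (hg.proj_mem hx)

lemma integrable_expXi_sub_one_mul (hS : ∀ᵐ g ∂μ, memS g) (hf : memL f) {x : Fin q → ℝ}
    (hx : inBbar x) (t : ℝ) : Integrable (fun g => (expXi t g x - 1) * f (proj g x)) μ := by
  refine ((integrable_expXi_mul hS hf hx t).sub (integrable_expXi_mul hS hf hx 0)).congr
    (Eventually.of_forall fun g => ?_)
  simp [expXi_zero, sub_mul]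

lemma Ptop_sub_Ptop_zero (hS : ∀ᵐ g ∂μ, memS g) (hf : memL f) {x : Fin q → ℝ}
    (hx : inBbar x) (t : ℝ) :
    Ptop μ t f x - Ptop μ 0 f x = ∫ g, (expXi t g x - 1) * f (proj g x) ∂μ := by
  rw [Ptop_eq, Ptop_eq, ← integral_sub (integrable_expXi_mul hS hf hx t)
    (integrable_expXi_mul hS hf hx 0)]
  simp only [expXi_zero, sub_mul, one_mul]

lemma norm_Ptop_le (hS : ∀ᵐ g ∂μ, memS g) (hf : memL f) {x : Fin q → ℝ} (hx : inBbar x)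
    (t : ℝ) : ‖Ptop μ t f x‖ ≤ supnorm f := by
  rw [Ptop_eq]
  refine (norm_integral_le_of_norm_le (integrable_const (supnorm f)) ?_).trans (by simp)
  filter_upwards [hS] with g hg
  rw [norm_mul, norm_expXi, one_mul]
  exact hf.norm_le_supnorm (hg.proj_mem hx)

lemma norm_Ptop_zero_sub_le (hS : ∀ᵐ g ∂μ, memS g) (hf : memL f) {x y : Fin q → ℝ}
    (hx : inBbar x) (hy : inBbar y) : ‖Ptop μ 0 f x - Ptop μ 0 f y‖ ≤ mlip f * dB x y := by
  rw [Ptop_eq, Ptop_eq, ← integral_sub (integrable_expXi_mul hS hf hx 0)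
    (integrable_expXi_mul hS hf hy 0)]
  refine (norm_integral_le_of_norm_le (integrable_const (mlip f * dB x y)) ?_).trans (by simp)
  filter_upwards [hS] with g hg
  simp only [expXi_zero, one_mul]
  exact (hf.norm_sub_le_mlip (hg.proj_mem hx) (hg.proj_mem hy)).trans
    (mul_le_mul_of_nonneg_left (hg.dB_proj_le hx hy) (mlip_nonneg f))

variable [NeZero q]

lemma memS.norm_expXi_sub_one_le {g : Mat q} (hg : memS g) {x : Fin q → ℝ} (hx : inBbar x)
    (t : ℝ) : ‖expXi t g x - 1‖ ≤ min (|t| * ellg g) 2 := by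
  have h := norm_exp_I_mul_sub_exp_I_mul_le (t * xi g x) 0
  rw [Complex.ofReal_zero, mul_zero, Complex.exp_zero, sub_zero, abs_mul, ← expXi_eq] at h
  exact h.trans (min_le_min_right _
    (mul_le_mul_of_nonneg_left (hg.abs_xi_le_ellg hx) (abs_nonneg t)))

lemma memS.norm_integrand_sub_le (hf : memL f) {g : Mat q} (hg : memS g)
    {x y : Fin q → ℝ} (hx : inBbar x) (hy : inBbar y) (t : ℝ) :
    ‖(expXi t g x - 1) * f (proj g x) - (expXi t g y - 1) * f (proj g y)‖ ≤
      (3 * supnorm f + mlip f) * dB x y * min (|t| * ellg g) 2 +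
        10 * |t| * supnorm f * dB x y := by
  have hu := hf.norm_le_supnorm (hg.proj_mem hx)
  have huw := (hf.norm_sub_le_mlip (hg.proj_mem hx) (hg.proj_mem hy)).trans
    (mul_le_mul_of_nonneg_left (hg.dB_proj_le hx hy) (mlip_nonneg f))
  have hxy := (norm_expXi_sub_expXi_le t g x y).trans (hg.min_mul_abs_xi_sub_le hx hy t)
  calc ‖(expXi t g x - 1) * f (proj g x) - (expXi t g y - 1) * f (proj g y)‖
      = ‖(expXi t g x - expXi t g y) * f (proj g x) +
          (expXi t g y - 1) * (f (proj g x) - f (proj g y))‖ := by ring_nf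
    _ ≤ ‖expXi t g x - expXi t g y‖ * ‖f (proj g x)‖ +
          ‖expXi t g y - 1‖ * ‖f (proj g x) - f (proj g y)‖ := by
        rw [← norm_mul, ← norm_mul]
        exact norm_add_le _ _
    _ ≤ (3 * min (|t| * ellg g) 2 + 10 * |t|) * dB x y * supnorm f +
          min (|t| * ellg g) 2 * (mlip f * dB x y) :=
        add_le_add (mul_le_mul hxy hu (norm_nonneg _) ((norm_nonneg _).trans hxy))
          (mul_le_mul (hg.norm_expXi_sub_one_le hy t) huw (norm_nonneg _)
            (min_mul_ellg_nonneg t g))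
    _ = _ := by ring

lemma norm_integral_le_mul_epsT_add (hS : ∀ᵐ g ∂μ, memS g) {F : Mat q → ℂ} {t a b : ℝ}
    (hF : ∀ᵐ g ∂μ, ‖F g‖ ≤ a * min (|t| * ellg g) 2 + b) :
    ‖∫ g, F g ∂μ‖ ≤ a * epsT μ t + b := by
  have hint : Integrable (fun g => min (|t| * ellg g) 2) μ := by
    refine Integrable.of_bound ((aemeasurable_ellg hS).const_mul |t| |>.min
      aemeasurable_const).aestronglyMeasurable 2 (Eventually.of_forall fun g => ?_)
    rw [Real.norm_of_nonneg (min_mul_ellg_nonneg t g)]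
    exact min_le_right _ _
  have hint' : Integrable (fun g => a * min (|t| * ellg g) 2 + b) μ :=
    (hint.const_mul a).add (integrable_const b)
  refine (norm_integral_le_of_norm_le hint' hF).trans_eq ?_
  rw [integral_add (hint.const_mul a) (integrable_const b), integral_const_mul, integral_const,
    probReal_univ, one_smul, epsT]

lemma norm_Ptop_sub_Ptop_zero_le (hS : ∀ᵐ g ∂μ, memS g) (hf : memL f) {x : Fin q → ℝ}
    (hx : inBbar x) (t : ℝ) : ‖Ptop μ t f x - Ptop μ 0 f x‖ ≤ supnorm f * epsT μ t := by
  rw [Ptop_sub_Ptop_zero hS hf hx, ← add_zero (supnorm f * epsT μ t)]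
  refine norm_integral_le_mul_epsT_add hS ?_
  filter_upwards [hS] with g hg
  rw [norm_mul, add_zero, mul_comm (supnorm f)]
  exact mul_le_mul (hg.norm_expXi_sub_one_le hx t) (hf.norm_le_supnorm (hg.proj_mem hx))
    (norm_nonneg _) (min_mul_ellg_nonneg t g)

lemma norm_Ptop_sub_Ptop_zero_sub_le (hS : ∀ᵐ g ∂μ, memS g) (hf : memL f) (t : ℝ)
    {x y : Fin q → ℝ} (hx : inBbar x) (hy : inBbar y) :
    ‖(Ptop μ t f x - Ptop μ 0 f x) - (Ptop μ t f y - Ptop μ 0 f y)‖ ≤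
      ((3 * supnorm f + mlip f) * epsT μ t + 10 * |t| * supnorm f) * dB x y := by
  rw [Ptop_sub_Ptop_zero hS hf hx, Ptop_sub_Ptop_zero hS hf hy,
    ← integral_sub (integrable_expXi_sub_one_mul hS hf hx t)
      (integrable_expXi_sub_one_mul hS hf hy t)]
  refine (norm_integral_le_mul_epsT_add hS (a := (3 * supnorm f + mlip f) * dB x y)
    (b := 10 * |t| * supnorm f * dB x y) ?_).trans_eq (by ring)
  filter_upwards [hS] with g hg
  exact hg.norm_integrand_sub_le hf hx hy t

lemma norm_Ptop_sub_le (hS : ∀ᵐ g ∂μ, memS g) (hf : memL f) (t : ℝ)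
    {x y : Fin q → ℝ} (hx : inBbar x) (hy : inBbar y) :
    ‖Ptop μ t f x - Ptop μ t f y‖ ≤
      ((3 * supnorm f + mlip f) * epsT μ t + 10 * |t| * supnorm f + mlip f) * dB x y := by
  calc ‖Ptop μ t f x - Ptop μ t f y‖
      = ‖((Ptop μ t f x - Ptop μ 0 f x) - (Ptop μ t f y - Ptop μ 0 f y)) +
          (Ptop μ 0 f x - Ptop μ 0 f y)‖ := by ring_nf
    _ ≤ _ := (norm_add_le _ _).trans (add_le_add (norm_Ptop_sub_Ptop_zero_sub_le hS hf t hx hy)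
          (norm_Ptop_zero_sub_le hS hf hx hy))
    _ = _ := by ring

end FourierKernel

/-- **Theorem III.2.** Each Fourier kernel `P_t` is a bounded operator on `L`,
and `‖P_t − P‖_L ≤ 4 ε(t) + C'|t|` for a universal constant `C'`. -/
theorem statement14 :
    ∃ C' : ℝ, 0 < C' ∧
      ∀ (q : ℕ), 1 ≤ q → ∀ μ : Measure (Mat q), IsProbabilityMeasure μ →
        μ {g : Mat q | memS g} = 1 →
        -- each `P_t` is a bounded operator of `L`
        (∀ (t : ℝ) (f : (Fin q → ℝ) → ℂ), memL f → memL (Ptop μ t f)) ∧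
        (∀ t : ℝ, ∃ K : ℝ, 0 < K ∧ ∀ f : (Fin q → ℝ) → ℂ, memL f →
          normL (Ptop μ t f) ≤ K * normL f) ∧
        -- `‖P_t − P‖_L ≤ 4 ε(t) + C' |t|`
        (∀ (t : ℝ) (f : (Fin q → ℝ) → ℂ), memL f →
          normL (fun x => Ptop μ t f x - Ptop μ 0 f x)
            ≤ (4 * epsT μ t + C' * |t|) * normL f) := by
  refine ⟨10, by norm_num, fun q hq μ _ hμS => ?_⟩
  have : NeZero q := ⟨by omega⟩
  have hS : ∀ᵐ g ∂μ, memS g :=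
    (ae_iff_measure_eq measurableSet_memS.nullMeasurableSet).2 (by rw [hμS, measure_univ])
  refine ⟨fun t f hf => ⟨_, fun x y hx hy => norm_Ptop_sub_le hS hf t hx hy⟩,
    fun t => ⟨1 + 4 * epsT μ t + 10 * |t|, by linarith [epsT_nonneg μ t, abs_nonneg t],
      fun f hf => ?_⟩, fun t f hf => ?_⟩
  all_goals have := epsT_nonneg μ t; have := supnorm_nonneg f; have := mlip_nonneg f
  · calc normL (Ptop μ t f)
        ≤ supnorm f + ((3 * supnorm f + mlip f) * epsT μ t + 10 * |t| * supnorm f + mlip f) :=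
          normL_le (by positivity) (by positivity) (fun x hx => norm_Ptop_le hS hf hx t)
            fun x y hx hy => norm_Ptop_sub_le hS hf t hx hy
      _ ≤ (1 + 4 * epsT μ t + 10 * |t|) * normL f := by
          rw [normL]
          nlinarith [abs_nonneg t]
  · calc normL (fun x => Ptop μ t f x - Ptop μ 0 f x)
        ≤ supnorm f * epsT μ t + ((3 * supnorm f + mlip f) * epsT μ t + 10 * |t| * supnorm f) :=
          normL_le (by positivity) (by positivity)
            (fun x hx => norm_Ptop_sub_Ptop_zero_le hS hf hx t)
            fun x y hx hy => norm_Ptop_sub_Ptop_zero_sub_le hS hf t hx hy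
      _ ≤ (4 * epsT μ t + 10 * |t|) * normL f := by
          rw [normL]
          nlinarith [abs_nonneg t]

end StablePaper
end
end
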